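/- arXiv:math/9202205 — 2 statements merged into one kernel-verified Lean document; each statement's English description precedes it below -/
import Mathlib

section
/- Let γ be an ordinal closed under ordinal addition, let x ∈ θ_γ be a finite sequence of length n, and let α < γ. Let A^α_x be the set of all y ∈ θ_γ such that (i) x is an initial segment of y (not necessarily proper), and (ii) if length(y) > n then y(n) ≥ α. Then A^α_x, with the ordering of θ_γ restricted to it, is order isomorphic to θ_γ. -/
/-- The carrier of the linear order `θ_γ`: finite sequences of ordinals `< γ`. -/
def ThetaCarrier (γ : Ordinal) : Type _ := {l : List Ordinal // ∀ o ∈ l, o < γ}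

/-- The strict order of `θ_γ` on underlying lists: `x < y` iff `y` is a proper initial
segment of `x`, or there is `n < min (length x) (length y)` with `x↾n = y↾n` and
`x(n) < y(n)`. -/
def thetaLt (x y : List Ordinal) : Prop :=
  (y <+: x ∧ y ≠ x) ∨
    ∃ (n : ℕ) (hx : n < x.length) (hy : n < y.length),
      x.take n = y.take n ∧ x.get ⟨n, hx⟩ < y.get ⟨n, hy⟩

/-- The strict order of `θ_γ`. -/
def thetaRel (γ : Ordinal) : ThetaCarrier γ → ThetaCarrier γ → Prop :=
  fun a b => thetaLt a.1 b.1

/-!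
Cut `y ∈ A^α_x` into `y = x ++ s` where `s` is empty or starts with an ordinal `≥ α`, and send
`s` to `s` with its head `c` replaced by `c - α`. The inverse adds `α` back to the head, which
stays below `γ` because `γ` is closed under addition. Both the common prefix `x` and the strictly
monotone map `c ↦ α + c` on the first letter preserve the lexicographic order of `θ_γ`.
-/

namespace List

theorem forall_get_length_append_iff {β : Type*} {p : β → Prop} {x s : List β} :
    (∀ h : x.length < (x ++ s).length, p ((x ++ s).get ⟨x.length, h⟩)) ↔ ∀ c ∈ s.head?, p c := by
  cases s with
  | nil => simp
  | cons c t => simp [List.getElem_append_right]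

theorem forall_mem_modifyHead {β : Type*} {p : β → Prop} {f : β → β} (hf : ∀ c, p c → p (f c))
    {l : List β} (hl : ∀ c ∈ l, p c) : ∀ c ∈ l.modifyHead f, p c := by
  cases l with
  | nil => simp
  | cons c t =>
    simp only [modifyHead_cons, forall_mem_cons] at hl ⊢
    exact ⟨hf c hl.1, hl.2⟩

end List

theorem thetaLt_cons_cons_iff {c c' : Ordinal} {a b : List Ordinal} :
    thetaLt (c :: a) (c' :: b) ↔ c < c' ∨ c = c' ∧ thetaLt a b := by
  constructor
  · rintro (⟨hpre, hne⟩ | ⟨n, hx, hy, htake, hlt⟩)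
    · obtain ⟨rfl, hpre'⟩ := List.cons_prefix_cons.mp hpre
      exact Or.inr ⟨rfl, Or.inl ⟨hpre', fun h => hne (by rw [h])⟩⟩
    · cases n with
      | zero => exact Or.inl (by simpa using hlt)
      | succ m =>
        simp only [List.take_succ_cons, List.cons.injEq] at htake
        exact Or.inr ⟨htake.1, Or.inr ⟨m, Nat.lt_of_succ_lt_succ hx,
          Nat.lt_of_succ_lt_succ hy, htake.2, by simpa using hlt⟩⟩
  · rintro (hlt | ⟨rfl, ⟨hpre, hne⟩ | ⟨n, hx, hy, htake, hlt⟩⟩)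
    · exact Or.inr ⟨0, by simp, by simp, by simp, by simpa using hlt⟩
    · exact Or.inl ⟨List.cons_prefix_cons.mpr ⟨rfl, hpre⟩, by simp [hne]⟩
    · exact Or.inr ⟨n + 1, Nat.succ_lt_succ hx, Nat.succ_lt_succ hy,
        by simp [htake], by simpa using hlt⟩

theorem not_nil_thetaLt (b : List Ordinal) : ¬ thetaLt [] b := by
  rintro (⟨hpre, hne⟩ | ⟨n, hx, -⟩)
  · exact hne (List.prefix_nil.mp hpre)
  · simp at hx

theorem thetaLt_nil_iff {a : List Ordinal} : thetaLt a [] ↔ a ≠ [] := by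
  constructor
  · rintro (⟨-, hne⟩ | ⟨n, -, hy, -⟩)
    · exact hne.symm
    · simp at hy
  · exact fun h => Or.inl ⟨List.nil_prefix, Ne.symm h⟩

theorem thetaLt_append_left_iff (x : List Ordinal) {a b : List Ordinal} :
    thetaLt (x ++ a) (x ++ b) ↔ thetaLt a b := by
  induction x with
  | nil => rfl
  | cons c t ih => simp [thetaLt_cons_cons_iff, ih]

theorem thetaLt_modifyHead_iff {f : Ordinal → Ordinal} (hf : StrictMono f) {a b : List Ordinal} :
    thetaLt (a.modifyHead f) (b.modifyHead f) ↔ thetaLt a b := by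
  cases a <;> cases b <;>
    simp [not_nil_thetaLt, thetaLt_nil_iff, thetaLt_cons_cons_iff, hf.lt_iff_lt,
      hf.injective.eq_iff]

/-- The set `A^α_x`. -/
def thetaCone {γ : Ordinal} (x : ThetaCarrier γ) (α : Ordinal) : Set (ThetaCarrier γ) :=
  {y | x.1 <+: y.1 ∧ ∀ h : x.1.length < y.1.length, α ≤ y.1.get ⟨x.1.length, h⟩}

theorem append_mem_thetaCone_iff {γ α : Ordinal} {x : ThetaCarrier γ} {s : List Ordinal}
    (hs : ∀ c ∈ x.1 ++ s, c < γ) : ⟨x.1 ++ s, hs⟩ ∈ thetaCone x α ↔ ∀ c ∈ s.head?, α ≤ c :=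
  (and_iff_right (List.prefix_append _ _)).trans List.forall_get_length_append_iff

noncomputable def thetaConeEquiv {γ α : Ordinal} (hγ : ∀ δ < γ, ∀ δ' < γ, δ + δ' < γ)
    (x : ThetaCarrier γ) (hα : α < γ) : ThetaCarrier γ ≃ thetaCone x α where
  toFun z := by
    refine ⟨⟨x.1 ++ z.1.modifyHead (α + ·), ?_⟩, ?_⟩
    · exact List.forall_mem_append.2 ⟨x.2, List.forall_mem_modifyHead (hγ α hα) z.2⟩
    · refine (append_mem_thetaCone_iff _).2 ?_
      cases z.1 <;> simp
  invFun y := ⟨(y.1.1.drop x.1.length).modifyHead (· - α),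
    List.forall_mem_modifyHead (fun c hc => (Ordinal.sub_le_self c α).trans_lt hc)
      fun c hc => y.1.2 c (List.mem_of_mem_drop hc)⟩
  left_inv z := by
    refine Subtype.ext ?_
    cases hz : z.1 <;> simp [hz, Ordinal.add_sub_cancel]
  right_inv y := by
    obtain ⟨⟨y, hyγ⟩, hy⟩ := y
    obtain ⟨s, rfl⟩ := hy.1
    have hs : ∀ c ∈ s.head?, α ≤ c := (append_mem_thetaCone_iff hyγ).mp hy
    refine Subtype.ext (Subtype.ext ?_)
    cases s <;> simp_all [Ordinal.add_sub_cancel_of_le]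

theorem thetaRel_thetaConeEquiv_iff {γ α : Ordinal} (hγ : ∀ δ < γ, ∀ δ' < γ, δ + δ' < γ)
    (x : ThetaCarrier γ) (hα : α < γ) {z z' : ThetaCarrier γ} :
    Subrel (thetaRel γ) (thetaCone x α) (thetaConeEquiv hγ x hα z) (thetaConeEquiv hγ x hα z') ↔
      thetaRel γ z z' :=
  (thetaLt_append_left_iff x.1).trans
    (thetaLt_modifyHead_iff fun _ _ h => (add_lt_add_iff_left α).2 h)

/-- Lemma 2.9: if `γ` is closed under ordinal addition, `x ∈ θ_γ` has length `n` and
`α < γ`, then the set `A^α_x` of all `y ∈ θ_γ` such that `x` is an initial segment of `y`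
and `y(n) ≥ α` whenever `length y > n`, with the order of `θ_γ` restricted to it,
is order isomorphic to `θ_γ`. -/
theorem theta_initialSegment_iso (γ : Ordinal)
    (hγ : ∀ δ < γ, ∀ δ' < γ, δ + δ' < γ)
    (x : ThetaCarrier γ) (α : Ordinal) (hα : α < γ) :
    Nonempty
      (Subrel (thetaRel γ)
          {y : ThetaCarrier γ |
            x.1 <+: y.1 ∧ ∀ h : x.1.length < y.1.length, α ≤ y.1.get ⟨x.1.length, h⟩}
        ≃r thetaRel γ) :=
  ⟨(RelIso.mk (thetaConeEquiv hγ x hα) (thetaRel_thetaConeEquiv_iff hγ x hα)).symm⟩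
end

section
/- Let γ be an ordinal closed under ordinal addition which is not a cardinal, and let α < β < |γ|⁺ be ordinals, where |γ|⁺ is the successor cardinal of the cardinality of γ. Then θ_γ is order isomorphic to θ_γ × (α, β]. -/
/-- The product `ρ × θ` of linear orders, ordered by last differences:
`(x, y) < (x', y')` iff `y < y'`, or `y = y'` and `x < x'`. -/
def lastDiffRel {A B : Type*} (r : A → A → Prop) (s : B → B → Prop) :
    A × B → A × B → Prop :=
  fun p q => s p.2 q.2 ∨ (p.2 = q.2 ∧ r p.1 q.1)

/-- The interval `(α, β]`: the set `{δ : α < δ ≤ β}`, together with `α` itself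
in case `α` is `0` or a limit ordinal. -/
def ocInterval (α β : Ordinal) : Set Ordinal :=
  {δ | (α < δ ∧ δ ≤ β) ∨ (δ = α ∧ (α = 0 ∨ Order.IsSuccLimit α))}

/-!
Write `t` for the order type of `θ_γ` and `⟦o⟧` for `o.toOrderType`. Products are ordered by last
differences, so `t * (a + b) = t * a + t * b`. Splitting off the first entry of a sequence
gives `t = t * ⟦γ⟧ + 1`, and as `w + γ = γ` for `w < γ`, this yields the absorption
`t * ⟦w⟧ + t = t`. Now `t * ⟦ζ + 1⟧ = t` for every `ζ` with `|ζ| ≤ |γ|`, by induction on `ζ`: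
cutting `ζ` along a fundamental sequence writes it as a sum of `cof ζ` blocks, each with a largest
element and hence of type `⟦e + 1⟧` for some `e < ζ`, so `t * ⟦ζ⟧ = t * ⟦cof ζ⟧`; and
`cof ζ ≤ |γ| < γ` since `γ` is not a cardinal. Finally `(α, β]` has largest element `β`, so it
has type `⟦e + 1⟧` for some `e ≤ β`.
-/

open Set
open scoped Ordinal

universe u

namespace OrderType

theorem type_eq_of_typeLT_eq {α β : Type u} [LinearOrder α] [WellFoundedLT α] [LinearOrder β]
    [WellFoundedLT β] (h : typeLT α = typeLT β) : type α = type β :=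
  type_congr (OrderIso.ofRelIsoLT (Ordinal.type_eq.mp h).some)

theorem type_eq_type_Iio_add_one {α : Type u} [LinearOrder α] {m : α} (hm : IsMax m) :
    type α = type (Iio m) + 1 := by
  have : Unique (Ici m) := ⟨⟨⟨m, le_rfl⟩⟩, fun x => Subtype.ext (hm.eq_of_le x.2).symm⟩
  rw [← type_of_unique (α := Ici m), ← type_lex_sum]
  exact (type_congr (OrderIso.sumLexIioIci m)).symm

variable {ι : Type u} [LinearOrder ι]

theorem type_eq_type_sigmaLex_fiber {α : Type u} [LinearOrder α] {c : α → ι} (hc : Monotone c) :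
    type α = type (Σₗ i, {a // c a = i}) := by
  let g : (Σₗ i, {a // c a = i}) → α := fun p => (ofLex p).2.1
  have hg : StrictMono g := by
    rintro ⟨i, a⟩ ⟨j, b⟩ (⟨_, _, hij⟩ | ⟨_, _, hab⟩)
    · exact hc.reflect_lt (show c a.1 < c b.1 by rwa [a.2, b.2])
    · exact hab
  exact (type_congr (hg.orderIsoOfSurjective g fun a => ⟨toLex ⟨c a, a, rfl⟩, rfl⟩)).symm

theorem type_mul_type_sigmaLex {α : ι → Type u} [∀ i, LinearOrder (α i)] {β : Type u}
    [LinearOrder β] (h : ∀ i, type β * type (α i) = type β) :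
    type β * type (Σₗ i, α i) = type β * type ι := by
  have e : ∀ i, α i ×ₗ β ≃o β := fun i => (type_eq_type.mp ((type_lex_prod _ _).trans (h i))).some
  let f : (Σₗ i, α i) ×ₗ β → ι ×ₗ β := fun p =>
    toLex ((ofLex (ofLex p).1).1, e _ (toLex ((ofLex (ofLex p).1).2, (ofLex p).2)))
  have hf : StrictMono f := by
    rintro ⟨⟨i, a⟩, b⟩ ⟨⟨j, a'⟩, b'⟩ h
    obtain (⟨_, _, hij⟩ | ⟨_, _, ha⟩) | ⟨hia, hb⟩ := Prod.Lex.toLex_lt_toLex.mp h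
    · exact Prod.Lex.toLex_lt_toLex.mpr (Or.inl hij)
    · exact Prod.Lex.toLex_lt_toLex.mpr
        (Or.inr ⟨rfl, (e i).strictMono (Prod.Lex.toLex_lt_toLex.mpr (Or.inl ha))⟩)
    · cases hia
      exact Prod.Lex.toLex_lt_toLex.mpr
        (Or.inr ⟨rfl, (e i).strictMono (Prod.Lex.toLex_lt_toLex.mpr (Or.inr ⟨rfl, hb⟩))⟩)
  have hsurj : Function.Surjective f := by
    rintro ⟨i, b⟩
    refine ⟨toLex (toLex ⟨i, (ofLex ((e i).symm b)).1⟩, (ofLex ((e i).symm b)).2), ?_⟩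
    exact congrArg (fun y => toLex (i, y)) ((e i).apply_symm_apply b)
  rw [← type_lex_prod, ← type_lex_prod]
  exact type_congr (hf.orderIsoOfSurjective f hsurj)

end OrderType

namespace Ordinal

/-- Taken as `Iio o` rather than `o.ToType`, so that it lives one universe up, together with
`θ_γ` and `ocInterval α β`. -/
noncomputable def toOrderType (o : Ordinal.{u}) : OrderType.{u + 1} := OrderType.type (Iio o)

theorem toOrderType_add (a b : Ordinal.{u}) :
    (a + b).toOrderType = a.toOrderType + b.toOrderType := by
  have h : Ordinal.type (Sum.Lex ((· < ·) : Iio a → Iio a → Prop) ((· < ·) : Iio b → _ → _)) =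
      typeLT (Iio (a + b)) := by
    simp only [type_sum_lex, type_lt_Iio, lift_add]
  rw [toOrderType, toOrderType, toOrderType, ← OrderType.type_lex_sum]
  exact (OrderType.type_congr (OrderIso.ofRelIsoLT (type_eq.mp h).some)).symm

theorem toOrderType_one : (1 : Ordinal.{u}).toOrderType = 1 :=
  OrderType.type_of_unique

theorem exists_type_eq_toOrderType {α : Type (u + 1)} [LinearOrder α] [WellFoundedLT α]
    {ζ : Ordinal.{u}} (f : α ↪o Iio ζ) : ∃ e ≤ ζ, OrderType.type α = e.toOrderType := by
  have hle : typeLT α ≤ lift.{u + 1} ζ := type_lt_Iio ζ ▸ type_le_iff'.mpr ⟨f.ltEmbedding⟩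
  obtain ⟨e, he⟩ := mem_range_lift_of_le hle
  exact ⟨e, lift_le.mp (he ▸ hle), OrderType.type_eq_of_typeLT_eq (by rw [type_lt_Iio, he])⟩

theorem exists_type_eq_toOrderType_add_one {α : Type (u + 1)} [LinearOrder α] [WellFoundedLT α]
    (f : α ↪o Ordinal.{u}) {m : α} (hm : IsMax m) :
    ∃ e ≤ f m, OrderType.type α = (e + 1).toOrderType := by
  obtain ⟨e, he, h⟩ := exists_type_eq_toOrderType
    (OrderEmbedding.ofStrictMono (fun x : Iio m => (⟨f x, f.strictMono x.2⟩ : Iio (f m)))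
      fun _ _ h => f.strictMono h)
  exact ⟨e, he, by rw [OrderType.type_eq_type_Iio_add_one hm, h, toOrderType_add, toOrderType_one]⟩

theorem exists_monotone_isGreatest_fiber (ζ : Ordinal.{u}) :
    ∃ c : Iio ζ → Iio ζ.cof.ord, Monotone c ∧ ∀ i, ∃ m, IsGreatest {x | c x = i} m := by
  obtain ⟨f, hf⟩ := exists_isFundamentalSeq (o := ζ) rfl
  let above (x : Iio ζ) : Set (Iio ζ.cof.ord) := {i | x ≤ f i}
  have hne : ∀ x, (above x).Nonempty := fun x => by
    obtain ⟨_, ⟨i, rfl⟩, hx⟩ := hf.isCofinal_range x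
    exact ⟨i, hx⟩
  let c : Iio ζ → Iio ζ.cof.ord := fun x => wellFounded_lt.min (above x) (hne x)
  have hc : ∀ x, x ≤ f (c x) := fun x => wellFounded_lt.min_mem (above x) (hne x)
  have hc_le : ∀ x i, x ≤ f i → c x ≤ i := fun x i hi =>
    not_lt.mp (wellFounded_lt.not_lt_min (above x) hi)
  refine ⟨c, fun x y hxy => hc_le x _ (hxy.trans (hc y)),
    fun i => ⟨f i, ?_, fun x (hx : c x = i) => hx ▸ hc x⟩⟩
  exact (hc_le _ i le_rfl).antisymm (hf.strictMono.le_iff_le.mp (hc (f i)))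

theorem type_mul_toOrderType_eq_mul_cof {β : Type (u + 1)} [LinearOrder β] {ζ : Ordinal.{u}}
    (h : ∀ e < ζ, OrderType.type β * (e + 1).toOrderType = OrderType.type β) :
    OrderType.type β * ζ.toOrderType = OrderType.type β * ζ.cof.ord.toOrderType := by
  obtain ⟨c, hc, hmax⟩ := exists_monotone_isGreatest_fiber ζ
  rw [toOrderType, toOrderType, OrderType.type_eq_type_sigmaLex_fiber hc]
  refine OrderType.type_mul_type_sigmaLex fun i => ?_
  obtain ⟨m, hmi, hm⟩ := hmax i
  obtain ⟨e, he, hfiber⟩ := exists_type_eq_toOrderType_add_one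
    ((OrderEmbedding.subtype _).trans (OrderEmbedding.subtype _))
    (m := (⟨m, hmi⟩ : {x // c x = i})) fun x _ => hm x.2
  rw [hfiber]
  exact h e (he.trans_lt m.2)

end Ordinal

theorem not_thetaLt_nil (y : List Ordinal) : ¬ thetaLt [] y := by
  rintro (⟨hp, hne⟩ | ⟨n, hx, -⟩)
  · exact hne (List.prefix_nil.mp hp)
  · exact absurd hx (Nat.not_lt_zero n)

theorem thetaLt_nil {x : List Ordinal} (h : x ≠ []) : thetaLt x [] :=
  Or.inl ⟨List.nil_prefix, Ne.symm h⟩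

theorem thetaLt_cons_cons {a b : Ordinal} {x y : List Ordinal} :
    thetaLt (a :: x) (b :: y) ↔ a < b ∨ a = b ∧ thetaLt x y := by
  constructor
  · rintro (⟨hp, hne⟩ | ⟨_ | n, hx, hy, ht, hlt⟩)
    · obtain ⟨rfl, hyx⟩ := List.cons_prefix_cons.mp hp
      exact Or.inr ⟨rfl, Or.inl ⟨hyx, fun e => hne (e ▸ rfl)⟩⟩
    · exact Or.inl hlt
    · rw [List.take_succ_cons, List.take_succ_cons, List.cons_eq_cons] at ht
      obtain ⟨rfl, htake⟩ := ht
      exact Or.inr ⟨rfl, Or.inr ⟨n, Nat.lt_of_succ_lt_succ hx, Nat.lt_of_succ_lt_succ hy,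
        htake, hlt⟩⟩
  · rintro (h | ⟨rfl, ⟨hp, hne⟩ | ⟨n, hx, hy, ht, hlt⟩⟩)
    · exact Or.inr ⟨0, Nat.succ_pos _, Nat.succ_pos _, rfl, h⟩
    · exact Or.inl ⟨List.cons_prefix_cons.mpr ⟨rfl, hp⟩, fun e => hne (List.cons_eq_cons.mp e).2⟩
    · exact Or.inr ⟨n + 1, Nat.succ_lt_succ hx, Nat.succ_lt_succ hy,
        by rw [List.take_succ_cons, List.take_succ_cons, ht], hlt⟩

theorem thetaLt_iff_lex {x y : List Ordinal} : thetaLt x y ↔ List.Lex (· > ·) y x := by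
  induction x generalizing y with
  | nil => simpa using not_thetaLt_nil y
  | cons a x ih =>
    cases y with
    | nil => simpa using thetaLt_nil (List.cons_ne_nil a x)
    | cons b y => rw [thetaLt_cons_cons, List.cons_lex_cons_iff, ih, eq_comm]

instance (γ : Ordinal) : IsStrictTotalOrder (ThetaCarrier γ) (thetaRel γ) where
  irrefl x := by
    rw [thetaRel, thetaLt_iff_lex]
    exact List.lex_irrefl (r := (· > ·)) (fun a => lt_irrefl a) x.1
  trans x y z hxy hyz := by
    rw [thetaRel, thetaLt_iff_lex] at *
    exact List.lex_trans (fun h h' => lt_trans h' h) hyz hxy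
  trichotomous x y hxy hyx := by
    rw [thetaRel, thetaLt_iff_lex] at hxy hyx
    exact Subtype.ext (Std.Trichotomous.trichotomous (r := List.Lex (· > ·)) _ _ hyx hxy)

noncomputable instance (γ : Ordinal) : LinearOrder (ThetaCarrier γ) :=
  have := Classical.decRel (thetaRel γ)
  linearOrderOfSTO (thetaRel γ)

namespace ThetaCarrier

variable {γ : Ordinal.{u}}

def cons (a : Iio γ) (x : ThetaCarrier γ) : ThetaCarrier γ :=
  ⟨a.1 :: x.1, List.forall_mem_cons.mpr ⟨a.2, x.2⟩⟩

def consOrNil : (Iio γ ×ₗ ThetaCarrier γ) ⊕ₗ PUnit.{u + 2} → ThetaCarrier γ :=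
  fun p => Sum.elim (fun q => cons (ofLex q).1 (ofLex q).2) (fun _ => ⟨[], by simp⟩) (ofLex p)

theorem strictMono_consOrNil : StrictMono (consOrNil (γ := γ)) := by
  rintro (⟨a, x⟩ | ⟨⟩) (⟨b, y⟩ | ⟨⟩) h
  · obtain hab | ⟨rfl, hxy⟩ := Prod.Lex.toLex_lt_toLex.mp (Sum.Lex.inl_lt_inl_iff.mp h)
    · exact thetaLt_cons_cons.mpr (Or.inl hab)
    · exact thetaLt_cons_cons.mpr (Or.inr ⟨rfl, hxy⟩)
  · exact thetaLt_nil (List.cons_ne_nil _ _)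
  · exact absurd h Sum.Lex.not_inr_lt_inl
  · exact absurd h (lt_irrefl _)

theorem surjective_consOrNil : Function.Surjective (consOrNil (γ := γ)) := by
  rintro ⟨_ | ⟨a, x⟩, h⟩
  · exact ⟨toLex (Sum.inr PUnit.unit), rfl⟩
  · exact ⟨toLex (Sum.inl (toLex (⟨a, h a List.mem_cons_self⟩,
      ⟨x, fun o ho => h o (List.mem_cons_of_mem a ho)⟩))), rfl⟩

theorem type_eq_mul_add_one (γ : Ordinal.{u}) :
    OrderType.type (ThetaCarrier γ) = OrderType.type (ThetaCarrier γ) * γ.toOrderType + 1 := by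
  rw [Ordinal.toOrderType, ← OrderType.type_lex_prod,
    ← OrderType.type_of_unique (α := PUnit.{u + 2}), ← OrderType.type_lex_sum]
  exact (OrderType.type_congr
    (strictMono_consOrNil.orderIsoOfSurjective _ surjective_consOrNil)).symm

theorem type_mul_add_self (hγ : Ordinal.IsPrincipal (· + ·) γ) {w : Ordinal.{u}} (hw : w < γ) :
    OrderType.type (ThetaCarrier γ) * w.toOrderType + OrderType.type (ThetaCarrier γ) =
      OrderType.type (ThetaCarrier γ) := by
  set t := OrderType.type (ThetaCarrier γ)
  calc t * w.toOrderType + t = t * w.toOrderType + (t * γ.toOrderType + 1) := by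
        rw [← type_eq_mul_add_one]
    _ = t * (w + γ).toOrderType + 1 := by rw [Ordinal.toOrderType_add, mul_add, add_assoc]
    _ = t := by rw [hγ.add_eq_right hw, ← type_eq_mul_add_one]

theorem type_mul_add_one (hγ : Ordinal.IsPrincipal (· + ·) γ) (hκ : γ.card.ord < γ)
    (ζ : Ordinal.{u}) (hζ : ζ.card ≤ γ.card) :
    OrderType.type (ThetaCarrier γ) * (ζ + 1).toOrderType = OrderType.type (ThetaCarrier γ) := by
  induction ζ using WellFoundedLT.induction with
  | _ ζ ih =>
    rw [Ordinal.toOrderType_add, Ordinal.toOrderType_one, mul_add, mul_one,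
      Ordinal.type_mul_toOrderType_eq_mul_cof fun e he =>
        ih e he ((Ordinal.card_le_card he.le).trans hζ)]
    exact type_mul_add_self hγ
      ((Cardinal.ord_le_ord.mpr ((Ordinal.cof_le_card ζ).trans hζ)).trans_lt hκ)

end ThetaCarrier

def lexLtIsoLastDiffRel (A B : Type*) [LT A] [LT B] :
    ((· < ·) : B ×ₗ A → B ×ₗ A → Prop) ≃r
      lastDiffRel ((· < ·) : A → A → Prop) ((· < ·) : B → B → Prop) where
  toEquiv := toLex.symm.trans (Equiv.prodComm B A)
  map_rel_iff' := Prod.Lex.lt_iff.symm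

/-- Lemma 2.10(ii): if `γ` is closed under ordinal addition and is not a cardinal,
and `α < β < |γ|⁺`, then `θ_γ` is order isomorphic to `θ_γ × (α, β]`. -/
theorem theta_iso_theta_mul_interval (γ : Ordinal)
    (hγ : ∀ δ < γ, ∀ δ' < γ, δ + δ' < γ)
    (hγcard : γ.card.ord ≠ γ)
    (α β : Ordinal) (hαβ : α < β) (hβ : β < (Order.succ γ.card).ord) :
    Nonempty
      (thetaRel γ ≃r
        lastDiffRel (thetaRel γ)
          (fun a b : ocInterval α β => a.1 < b.1)) := by
  have hβmax : IsMax (⟨β, .inl ⟨hαβ, le_rfl⟩⟩ : ocInterval α β) := by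
    rintro ⟨x, ⟨-, hxβ⟩ | ⟨rfl, -⟩⟩ -
    exacts [hxβ, hαβ.le]
  obtain ⟨e, heβ, hS⟩ := Ordinal.exists_type_eq_toOrderType_add_one (OrderEmbedding.subtype _) hβmax
  have he : e.card ≤ γ.card :=
    (Ordinal.card_le_card heβ).trans (Order.lt_succ_iff.mp (Cardinal.lt_ord.mp hβ))
  have h := ThetaCarrier.type_mul_add_one (fun a b ha hb => hγ a ha b hb)
    ((Cardinal.ord_card_le γ).lt_of_ne hγcard) e he
  rw [← hS, ← OrderType.type_lex_prod] at h
  exact ⟨(OrderType.type_eq_type.mp h).some.symm.toRelIsoLT.trans (lexLtIsoLastDiffRel _ _)⟩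
end
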